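/- The largest eigenvalue μ of the Laplacian matrix of the graph G strictly exceeds max over all pairs of adjacent vertices v ~ j of 2 + √(√(8·(m_v⁴ + m_j⁴) − 8·(d_v² + d_j²) + 4) − 4·(d_v + d_j) + 6). (This gives a counterexample to conjectured bound 52 of Brankov, Hansen and Stevanović.) -/

import Mathlib

/-- The edge list of the graph. -/
def edgeList : List (Fin 12 × Fin 12) :=
  [(0,3),(0,4),(0,8),(1,2),(1,3),(1,8),(1,10),(2,5),(2,7),(2,11),(3,7),(3,11),(4,6),(4,7),(5,8),(5,9),(6,9),(6,10),(7,10),(9,11),(10,11)]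

/-- The graph under consideration. -/
def G : SimpleGraph (Fin 12) where
  Adj v w := (v, w) ∈ edgeList ∨ (w, v) ∈ edgeList
  symm := ⟨fun _ _ h => h.symm⟩
  loopless := ⟨by intro v; fin_cases v <;> decide⟩

instance : DecidableRel G.Adj :=
  fun v w => inferInstanceAs (Decidable ((v, w) ∈ edgeList ∨ (w, v) ∈ edgeList))

/-- `d v` is the degree of the vertex `v`, as a real number. -/
noncomputable def d (v : Fin 12) : ℝ := G.degree v

/-- `m v` is the average of the degrees of the neighbours of `v`. -/
noncomputable def m (v : Fin 12) : ℝ :=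
  (∑ u ∈ G.neighborFinset v, (G.degree u : ℝ)) / d v

/-- Integer version of the Laplacian matrix. -/
def Lint : Matrix (Fin 12) (Fin 12) ℤ :=
  Matrix.of fun i j => (if i = j then (G.degree i : ℤ) else 0) - (if G.Adj i j then 1 else 0)

def pvec : Fin 12 → ℤ := ![-1,-1,1,1,1,-1,-1,-1,1,1,1,-1]
def qvec : Fin 12 → ℤ := ![0,-1,1,1,0,0,0,-1,0,0,1,-1]

lemma hp : Lint.mulVec pvec = fun v => 6 * pvec v + 2 * qvec v := by decide
lemma hq : Lint.mulVec qvec = fun v => pvec v + 6 * qvec v := by decide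

noncomputable def xvec : Fin 12 → ℝ := fun v => (pvec v : ℝ) + (qvec v : ℝ) * Real.sqrt 2

lemma hL (i j : Fin 12) : (G.lapMatrix ℝ) i j = ((Lint i j : ℤ) : ℝ) := by
  simp only [SimpleGraph.lapMatrix, SimpleGraph.degMatrix, SimpleGraph.adjMatrix,
    Matrix.sub_apply, Matrix.diagonal, Matrix.of_apply, Lint]
  split_ifs <;> push_cast <;> ring

lemma eigen_eq : (G.lapMatrix ℝ).mulVec xvec = (6 + Real.sqrt 2) • xvec := by
  have hs : Real.sqrt 2 ^ 2 = 2 := Real.sq_sqrt (by norm_num)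
  funext i
  have h1 : (G.lapMatrix ℝ).mulVec xvec i
      = ((Lint.mulVec pvec i : ℤ) : ℝ) + ((Lint.mulVec qvec i : ℤ) : ℝ) * Real.sqrt 2 := by
    simp only [Matrix.mulVec, dotProduct, hL, xvec]
    push_cast
    rw [Finset.sum_mul, ← Finset.sum_add_distrib]
    congr 1; funext j; ring
  rw [h1, hp, hq]
  simp only [Pi.smul_apply, smul_eq_mul, xvec]
  push_cast
  linear_combination (-(qvec i : ℝ)) * hs

lemma xvec_ne_zero : xvec ≠ 0 := by
  intro h
  have h4 := congrFun h 4
  simp [xvec, pvec, qvec] at h4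

lemma mem_spec : (6 + Real.sqrt 2) ∈ spectrum ℝ (G.lapMatrix ℝ) := by
  rw [← AlgEquiv.spectrum_eq (Matrix.toLinAlgEquiv' (R := ℝ) (n := Fin 12)),
    ← Module.End.hasEigenvalue_iff_mem_spectrum]
  apply Module.End.hasEigenvalue_of_hasEigenvector (x := xvec)
  refine ⟨Module.End.mem_eigenspace_iff.2 ?_, xvec_ne_zero⟩
  rw [Matrix.toLinAlgEquiv'_apply]
  exact eigen_eq

lemma dm (v : Fin 12) : (d v = 3 ∧ m v = 10/3) ∨ (d v = 4 ∧ m v = 15/4) := by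
  have h0 : (G.degree v = 3 ∧ (∑ u ∈ G.neighborFinset v, G.degree u) = 10) ∨
      (G.degree v = 4 ∧ (∑ u ∈ G.neighborFinset v, G.degree u) = 15) := by revert v; decide
  have h1 : m v = ((∑ u ∈ G.neighborFinset v, G.degree u : ℕ) : ℝ) / ((G.degree v : ℕ) : ℝ) := by
    rw [m, d, ← Nat.cast_sum]
  rcases h0 with ⟨hd, hs⟩ | ⟨hd, hs⟩
  · left; rw [d, hd, h1, hd, hs]; norm_num
  · right; rw [d, hd, h1, hd, hs]; norm_num

lemma key (E f g B : ℝ) (hB : 0 < B) (hEB : E < B ^ 2) (hc : B - f + g ≤ 29) :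
    2 + Real.sqrt (Real.sqrt E - f + g) < 6 + Real.sqrt 2 := by
  have hs : Real.sqrt 2 ^ 2 = 2 := Real.sq_sqrt (by norm_num)
  have h2 : (1.41 : ℝ) < Real.sqrt 2 := by
    rw [show (1.41:ℝ) < Real.sqrt 2 ↔ (1.41:ℝ)^2 < 2 from Real.lt_sqrt (by norm_num)]
    norm_num
  have h1 : Real.sqrt E < B := (Real.sqrt_lt' hB).2 hEB
  have h3 : Real.sqrt (Real.sqrt E - f + g) < 4 + Real.sqrt 2 := by
    rw [Real.sqrt_lt' (by positivity)]
    nlinarith [hs, h2, h1]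
  linarith

lemma bnd (a ma b mb : ℝ) (ha : (a = 3 ∧ ma = 10/3) ∨ (a = 4 ∧ ma = 15/4))
    (hb : (b = 3 ∧ mb = 10/3) ∨ (b = 4 ∧ mb = 15/4)) :
    2 + Real.sqrt (Real.sqrt (8 * (ma ^ 4 + mb ^ 4) - 8 * (a ^ 2 + b ^ 2) + 4)
      - 4 * (a + b) + 6) < 6 + Real.sqrt 2 := by
  rcases ha with ⟨rfl, rfl⟩ | ⟨rfl, rfl⟩ <;> rcases hb with ⟨rfl, rfl⟩ | ⟨rfl, rfl⟩
  · exact key _ _ _ 43 (by norm_num) (by norm_num) (by norm_num)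
  · exact key _ _ _ 49 (by norm_num) (by norm_num) (by norm_num)
  · exact key _ _ _ 49 (by norm_num) (by norm_num) (by norm_num)
  · exact key _ _ _ 54 (by norm_num) (by norm_num) (by norm_num)

theorem laplacian_spectral_radius_exceeds_bound (μ : ℝ)
    (hmem : μ ∈ spectrum ℝ (G.lapMatrix ℝ))
    (hmax : ∀ ν ∈ spectrum ℝ (G.lapMatrix ℝ), ν ≤ μ) :
    (Finset.univ.filter fun p : _ × _ => G.Adj p.1 p.2).sup' (by decide)
      (fun p => 2 + Real.sqrt (Real.sqrt (8 * (m p.1 ^ 4 + m p.2 ^ 4) - 8 * (d p.1 ^ 2 + d p.2 ^ 2) + 4) - 4 * (d p.1 + d p.2) + 6)) < μ := by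
  rw [Finset.sup'_lt_iff]
  intro p _
  have hmu : 6 + Real.sqrt 2 ≤ μ := hmax _ mem_spec
  have := bnd (d p.1) (m p.1) (d p.2) (m p.2) (dm p.1) (dm p.2)
  linarith
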